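/- Let S be a nonempty type, let Λ : S → S → ℝ satisfy Λ(x,y) > 0 for all x, y and the multiplicative triangle inequality Λ(x,z) ≤ Λ(x,y)·Λ(y,z) for all x, y, z, and let φ : S → S satisfy Λ(φ x, φ y) = Λ(x, y) for all x, y. Let X ∈ S satisfy both: (i) Λ(X, φᵏ X) = (Λ(X, φ X))ᵏ for every k ≥ 1, and (ii) Λ(X, φ X) ≤ Λ(Y, φ Y) for every Y ∈ S. Then for every n ≥ 1: Λ(X, (φⁿ) X) = (Λ(X, φ X))ⁿ and (Λ(X, φ X))ⁿ ≤ Λ(Y, φⁿ Y) for every Y ∈ S; consequently the minimal displacement of φⁿ equals the n-th power of the minimal displacement of φ, λ(φⁿ) = λ(φ)ⁿ, and it is realized at X. (Corollary 'corollaryphin', via the existence of partial train tracks.) -/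

import Mathlib

/-!
If the displacement of `g` at `X` grows exactly like `Λ(X, gX)ᵏ` along the orbit, then comparing
with any other point `Y` gives `Λ(X, gX)ᵏ ≤ Λ(X, Y) Λ(Y, X) Λ(Y, gY)ᵏ` for every `k`, since the
displacement of `gᵏ` at `Y` is at most `Λ(Y, gY)ᵏ`. Taking `k`-th roots as `k → ∞` kills the
constant, so `X` minimises the displacement of `g`. The hypothesis on `X` passes from `φ` to `φⁿ`,
so `X` minimises the displacement of every power of `φ`.
-/

theorem le_of_forall_pow_le_mul_pow {K : Type*} [Field K] [LinearOrder K] [IsStrictOrderedRing K]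
    [Archimedean K] {a b C : K} (hb : 0 < b) (h : ∀ m : ℕ, 1 ≤ m → a ^ m ≤ C * b ^ m) :
    a ≤ b := by
  by_contra! hba
  obtain ⟨m, hm⟩ := pow_unbounded_of_one_lt C ((one_lt_div hb).2 hba)
  have hCm : C * b ^ (m + 1) < a ^ (m + 1) := by
    have : C < (a / b) ^ (m + 1) :=
      hm.trans_le (pow_le_pow_right₀ ((one_lt_div hb).2 hba).le m.le_succ)
    rwa [div_pow, lt_div_iff₀ (pow_pos hb _)] at this
  exact (h (m + 1) m.succ_pos).not_gt hCm

theorem ciInf_eq_of_forall_apply_le {ι α : Type*} [ConditionallyCompleteLattice α] {f : ι → α}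
    {i : ι} (h : ∀ j, f i ≤ f j) : ⨅ j, f j = f i :=
  IsLeast.csInf_eq ⟨Set.mem_range_self i, Set.forall_mem_range.2 h⟩

section Displacement

variable {S : Type*} {Λ : S → S → ℝ} {g : S → S}

theorem iterate_isometry (hiso : ∀ x y, Λ (g x) (g y) = Λ x y) (k : ℕ) (x y : S) :
    Λ (g^[k] x) (g^[k] y) = Λ x y := by
  induction k generalizing x y with
  | zero => rfl
  | succ k ih => rw [Function.iterate_succ_apply, Function.iterate_succ_apply, ih, hiso]

theorem displacement_iterate_le_pow (hpos : ∀ x y, 0 < Λ x y)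
    (htri : ∀ x y z, Λ x z ≤ Λ x y * Λ y z) (hiso : ∀ x y, Λ (g x) (g y) = Λ x y) (Y : S)
    {k : ℕ} (hk : 1 ≤ k) : Λ Y (g^[k] Y) ≤ Λ Y (g Y) ^ k := by
  induction k, hk using Nat.le_induction with
  | base => simp
  | succ k _ ih =>
    calc Λ Y (g^[k + 1] Y) ≤ Λ Y (g Y) * Λ (g Y) (g^[k + 1] Y) := htri _ _ _
      _ = Λ Y (g Y) * Λ Y (g^[k] Y) := by rw [Function.iterate_succ_apply', hiso]
      _ ≤ Λ Y (g Y) * Λ Y (g Y) ^ k := by gcongr; exact (hpos _ _).le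
      _ = Λ Y (g Y) ^ (k + 1) := (pow_succ' _ _).symm

theorem displacement_le_mul_displacement (hpos : ∀ x y, 0 < Λ x y)
    (htri : ∀ x y z, Λ x z ≤ Λ x y * Λ y z) (hiso : ∀ x y, Λ (g x) (g y) = Λ x y) (X Y : S) :
    Λ X (g X) ≤ Λ X Y * Λ Y X * Λ Y (g Y) :=
  calc Λ X (g X) ≤ Λ X Y * Λ Y (g X) := htri _ _ _
    _ ≤ Λ X Y * (Λ Y (g Y) * Λ (g Y) (g X)) := by gcongr; exacts [(hpos _ _).le, htri _ _ _]
    _ = Λ X Y * Λ Y X * Λ Y (g Y) := by rw [hiso]; ring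

theorem displacement_le_of_iterate_eq_pow (hpos : ∀ x y, 0 < Λ x y)
    (htri : ∀ x y z, Λ x z ≤ Λ x y * Λ y z) (hiso : ∀ x y, Λ (g x) (g y) = Λ x y) {X : S}
    (hX : ∀ k : ℕ, 1 ≤ k → Λ X (g^[k] X) = Λ X (g X) ^ k) (Y : S) :
    Λ X (g X) ≤ Λ Y (g Y) := by
  refine le_of_forall_pow_le_mul_pow (C := Λ X Y * Λ Y X) (hpos Y (g Y)) fun k hk => ?_
  calc Λ X (g X) ^ k = Λ X (g^[k] X) := (hX k hk).symm
    _ ≤ Λ X Y * Λ Y X * Λ Y (g^[k] Y) :=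
      displacement_le_mul_displacement hpos htri (iterate_isometry hiso k) X Y
    _ ≤ Λ X Y * Λ Y X * Λ Y (g Y) ^ k :=
      mul_le_mul_of_nonneg_left (displacement_iterate_le_pow hpos htri hiso Y hk)
        (mul_pos (hpos X Y) (hpos Y X)).le

theorem iterate_eq_pow_of_iterate_eq_pow {X : S}
    (hX : ∀ k : ℕ, 1 ≤ k → Λ X (g^[k] X) = Λ X (g X) ^ k) {n : ℕ} (hn : 1 ≤ n) :
    ∀ k : ℕ, 1 ≤ k → Λ X ((g^[n])^[k] X) = Λ X (g^[n] X) ^ k := by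
  intro k hk
  rw [← Function.iterate_mul, hX _ (Nat.one_le_iff_ne_zero.2 (by positivity)), hX n hn, pow_mul]

end Displacement

theorem min_displacement_of_power_general
    (S : Type*) (Λ : S → S → ℝ)
    (hpos : ∀ x y : S, 0 < Λ x y)
    (htri : ∀ x y z : S, Λ x z ≤ Λ x y * Λ y z)
    (φ : S → S)
    (hiso : ∀ x y : S, Λ (φ x) (φ y) = Λ x y)
    (X : S)
    (htt : ∀ k : ℕ, 1 ≤ k → Λ X (φ^[k] X) = (Λ X (φ X)) ^ k)
    (hmin : ∀ Y : S, Λ X (φ X) ≤ Λ Y (φ Y)) :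
    ∀ n : ℕ, 1 ≤ n →
      Λ X (φ^[n] X) = (Λ X (φ X)) ^ n ∧
      (∀ Y : S, (Λ X (φ X)) ^ n ≤ Λ Y (φ^[n] Y)) ∧
      (⨅ Y : S, Λ Y (φ^[n] Y)) = (⨅ Y : S, Λ Y (φ Y)) ^ n ∧
      Λ X (φ^[n] X) = ⨅ Y : S, Λ Y (φ^[n] Y) := by
  intro n hn
  have hlow : ∀ Y, Λ X (φ^[n] X) ≤ Λ Y (φ^[n] Y) :=
    displacement_le_of_iterate_eq_pow hpos htri (iterate_isometry hiso n)
      (iterate_eq_pow_of_iterate_eq_pow htt hn)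
  have hinf_n : ⨅ Y, Λ Y (φ^[n] Y) = Λ X (φ^[n] X) := ciInf_eq_of_forall_apply_le hlow
  have hinf_one : ⨅ Y, Λ Y (φ Y) = Λ X (φ X) := ciInf_eq_of_forall_apply_le hmin
  refine ⟨htt n hn, fun Y => ?_, ?_, hinf_n.symm⟩
  · rw [← htt n hn]
    exact hlow Y
  · rw [hinf_n, hinf_one, htt n hn]

/-- Corollary `corollaryphin` (via existence of partial train tracks): if `X`
satisfies `Λ(X, φᵏX) = Λ(X, φX)ᵏ` for all `k ≥ 1` and minimizes the
displacement of `φ`, then for every `n ≥ 1` it also satisfies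
`Λ(X, φⁿX) = Λ(X, φX)ⁿ` and minimizes the displacement of `φⁿ`; consequently
`λ(φⁿ) = λ(φ)ⁿ` and this minimal displacement is realized at `X`. -/
theorem min_displacement_of_power
    (S : Type*) [Nonempty S] (Λ : S → S → ℝ)
    (hpos : ∀ x y : S, 0 < Λ x y)
    (htri : ∀ x y z : S, Λ x z ≤ Λ x y * Λ y z)
    (φ : S → S)
    (hiso : ∀ x y : S, Λ (φ x) (φ y) = Λ x y)
    (X : S)
    (htt : ∀ k : ℕ, 1 ≤ k → Λ X (φ^[k] X) = (Λ X (φ X)) ^ k)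
    (hmin : ∀ Y : S, Λ X (φ X) ≤ Λ Y (φ Y)) :
    ∀ n : ℕ, 1 ≤ n →
      Λ X (φ^[n] X) = (Λ X (φ X)) ^ n ∧
      (∀ Y : S, (Λ X (φ X)) ^ n ≤ Λ Y (φ^[n] Y)) ∧
      (⨅ Y : S, Λ Y (φ^[n] Y)) = (⨅ Y : S, Λ Y (φ Y)) ^ n ∧
      Λ X (φ^[n] X) = ⨅ Y : S, Λ Y (φ^[n] Y) :=
  min_displacement_of_power_general S Λ hpos htri φ hiso X htt hmin
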